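/- Let 0 < α < π, d ≥ 2, and set α' = α/(2^{100} d). Let C(α') be the solid cone about e₁ with apex half-angle α'/2, and let V ⊆ ℝ^d be a finite pattern with no three collinear points whose minimal angle (over all triples of distinct points, measured at the middle vertex) is α and whose minimal side length is 1. Then for every x ∈ C(α') and every r > 2M(x, α') (where M(x,α') is as in the cone-angle lemma), there is no isometry O ∈ O(d) with x + r·O(V) ⊆ C(α'), provided x is one of the vertices of the copy x + r·O(V). -/

import Mathlib

/-!
Pinning the copy at `x` forces `0 ∈ V`. Two further points `a, b` of `V` are sent to points of
the cone at distance `r‖a‖, r‖b‖ ≥ r > M x` from `x`, so the cone-angle lemma bounds the angle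
they span at `x` by `2^10 α'`. But a dilation composed with an isometry preserves angles, so
that angle is `∠(a, b) ≥ α > 2^10 α'`.
-/

/-- The first standard basis vector of `ℝ^d`. -/
noncomputable def e1 (d : ℕ) : EuclideanSpace ℝ (Fin d) :=
  WithLp.toLp 2 (fun j : Fin d => (if (j : ℕ) = 0 then 1 else 0 : ℝ))

/-- The solid cone about the `e₁` axis with apex angle `α'`. -/
def cone (d : ℕ) (α' : ℝ) : Set (EuclideanSpace ℝ (Fin d)) :=
  {y | y ≠ 0 ∧ InnerProductGeometry.angle y (e1 d) ≤ α' / 2}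

open InnerProductGeometry

section SimilarCopy

variable {E : Type*} [NormedAddCommGroup E] [InnerProductSpace ℝ E]

theorem eq_zero_of_add_smul_map_eq_self (O : E ≃ₗᵢ[ℝ] E) {x v : E} {r : ℝ} (hr : r ≠ 0)
    (h : x + r • O v = x) : v = 0 := by
  simpa [hr] using h

theorem norm_add_smul_map_sub_self (O : E ≃ₗᵢ[ℝ] E) (x v : E) {r : ℝ} (hr : 0 ≤ r) :
    ‖x + r • O v - x‖ = r * ‖v‖ := by
  rw [add_sub_cancel_left, norm_smul, Real.norm_of_nonneg hr, O.norm_map]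

theorem angle_add_smul_map_sub_self (O : E ≃ₗᵢ[ℝ] E) (x a b : E) {r : ℝ} (hr : r ≠ 0) :
    angle (x + r • O a - x) (x + r • O b - x) = angle a b := by
  rw [add_sub_cancel_left, add_sub_cancel_left, angle_smul_smul hr]
  exact O.toLinearIsometry.angle_map a b

end SimilarCopy

theorem Set.exists_ne_ne_of_three_distinct {α : Type*} {V : Set α} {p q s : α} (hp : p ∈ V)
    (hq : q ∈ V) (hs : s ∈ V) (hpq : p ≠ q) (hps : p ≠ s) (hqs : q ≠ s) (c : α) :
    ∃ a ∈ V, ∃ b ∈ V, a ≠ b ∧ a ≠ c ∧ b ≠ c := by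
  by_cases hpc : p = c
  · subst hpc
    exact ⟨q, hq, s, hs, hqs, hpq.symm, hps.symm⟩
  by_cases hqc : q = c
  · subst hqc
    exact ⟨p, hp, s, hs, hps, hpq, hqs.symm⟩
  · exact ⟨p, hp, q, hq, hpq, hpc, hqc⟩

-- For `d = 0` the division by zero makes the left-hand side `0`.
theorem two_pow_ten_mul_div_lt {α : ℝ} (hα : 0 < α) (d : ℕ) :
    2 ^ 10 * (α / (2 ^ 100 * d)) < α := by
  rcases Nat.eq_zero_or_pos d with rfl | hd
  · simpa using hα
  · have hd' : (1 : ℝ) ≤ d := by exact_mod_cast hd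
    rw [mul_div_assoc', div_lt_iff₀ (by positivity)]
    nlinarith

theorem cone_avoids_pattern_general (d : ℕ) (α : ℝ) (hα0 : 0 < α)
    (α' : ℝ) (hα' : α' = α / (2 ^ 100 * d))
    (V : Set (EuclideanSpace ℝ (Fin d)))
    (hangle : ∀ p ∈ V, ∀ q ∈ V, ∀ s ∈ V, p ≠ q → p ≠ s → q ≠ s →
      α ≤ InnerProductGeometry.angle (q - p) (s - p))
    (hangle_eq : ∃ p ∈ V, ∃ q ∈ V, ∃ s ∈ V, p ≠ q ∧ p ≠ s ∧ q ≠ s ∧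
      InnerProductGeometry.angle (q - p) (s - p) = α)
    (hside : ∀ p ∈ V, ∀ q ∈ V, p ≠ q → 1 ≤ ‖p - q‖)
    (M : EuclideanSpace ℝ (Fin d) → ℝ)
    (hM : ∀ x ∈ cone d α', 0 < M x ∧ ∀ y ∈ cone d α', ∀ y' ∈ cone d α',
      M x ≤ ‖y - x‖ → M x ≤ ‖y' - x‖ →
      InnerProductGeometry.angle (y - x) (y' - x) ≤ 2 ^ 10 * α') :
    ∀ x ∈ cone d α', ∀ r : ℝ, 2 * M x < r →
      ∀ O : EuclideanSpace ℝ (Fin d) ≃ₗᵢ[ℝ] EuclideanSpace ℝ (Fin d),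
        (∃ v ∈ V, x + r • O v = x) → ¬ (∀ v ∈ V, x + r • O v ∈ cone d α') := by
  rintro x hx r hr O ⟨v₀, hv₀V, hv₀⟩ hcopy
  obtain ⟨hMpos, hMangle⟩ := hM x hx
  have hr0 : 0 < r := by linarith
  have h0V : (0 : EuclideanSpace ℝ (Fin d)) ∈ V :=
    eq_zero_of_add_smul_map_eq_self O hr0.ne' hv₀ ▸ hv₀V
  obtain ⟨p, hp, q, hq, s, hs, hpq, hps, hqs, -⟩ := hangle_eq
  obtain ⟨a, ha, b, hb, hab, ha0, hb0⟩ := Set.exists_ne_ne_of_three_distinct hp hq hs hpq hps hqs 0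
  have hfar : ∀ c ∈ V, c ≠ 0 → M x ≤ ‖x + r • O c - x‖ := fun c hc hc0 => by
    have hc1 : 1 ≤ ‖c‖ := by simpa using hside c hc 0 h0V hc0
    rw [norm_add_smul_map_sub_self O x c hr0.le]
    nlinarith
  have hsmall := hMangle _ (hcopy a ha) _ (hcopy b hb) (hfar a ha ha0) (hfar b hb hb0)
  rw [angle_add_smul_map_sub_self O x a b hr0.ne'] at hsmall
  have hlarge : α ≤ angle a b := by
    simpa using hangle 0 h0V a ha b hb (Ne.symm ha0) (Ne.symm hb0) hab
  have hgap := two_pow_ten_mul_div_lt hα0 d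
  rw [← hα'] at hgap
  linarith

/-- The thin cone `C(α')`, `α' = α/(2^{100}d)`, contains no pinned affine copy
`x + r·O(V)` of a pattern `V` with minimal angle `α` and minimal side length `1`
at any scale `r > 2M(x, α')`, where `M` is as in the cone-angle lemma and `x` is
one of the vertices of the copy. -/
theorem cone_avoids_pattern (d : ℕ) (hd : 2 ≤ d) (α : ℝ) (hα0 : 0 < α)
    (hαπ : α < Real.pi) (α' : ℝ) (hα' : α' = α / (2 ^ 100 * d))
    (V : Set (EuclideanSpace ℝ (Fin d))) (hVfin : V.Finite)
    (hVnocol : ∀ p ∈ V, ∀ q ∈ V, ∀ s ∈ V, p ≠ q → p ≠ s → q ≠ s →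
      ¬ Collinear ℝ ({p, q, s} : Set (EuclideanSpace ℝ (Fin d))))
    (hangle : ∀ p ∈ V, ∀ q ∈ V, ∀ s ∈ V, p ≠ q → p ≠ s → q ≠ s →
      α ≤ InnerProductGeometry.angle (q - p) (s - p))
    (hangle_eq : ∃ p ∈ V, ∃ q ∈ V, ∃ s ∈ V, p ≠ q ∧ p ≠ s ∧ q ≠ s ∧
      InnerProductGeometry.angle (q - p) (s - p) = α)
    (hside : ∀ p ∈ V, ∀ q ∈ V, p ≠ q → 1 ≤ ‖p - q‖)
    (hside_eq : ∃ p ∈ V, ∃ q ∈ V, p ≠ q ∧ ‖p - q‖ = 1)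
    (M : EuclideanSpace ℝ (Fin d) → ℝ)
    (hM : ∀ x ∈ cone d α', 0 < M x ∧ ∀ y ∈ cone d α', ∀ y' ∈ cone d α',
      M x ≤ ‖y - x‖ → M x ≤ ‖y' - x‖ →
      InnerProductGeometry.angle (y - x) (y' - x) ≤ 2 ^ 10 * α') :
    ∀ x ∈ cone d α', ∀ r : ℝ, 2 * M x < r →
      ∀ O : EuclideanSpace ℝ (Fin d) ≃ₗᵢ[ℝ] EuclideanSpace ℝ (Fin d),
        (∃ v ∈ V, x + r • O v = x) → ¬ (∀ v ∈ V, x + r • O v ∈ cone d α') :=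
  cone_avoids_pattern_general d α hα0 α' hα' V hangle hangle_eq hside M hM
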